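/- For the collapsed bilinear map, the smaller eigenvalue λ₂ of G satisfies c r² ≤ λ₂ ≤ C r² near the singular point, where r = (x² + (y−1)²)^{1/2}, for some constants 0 < c ≤ C; in particular λ₂ → 0 as (x,y) → (0,1) at quadratic rate. -/

import Mathlib

/-!
Writing `A = tr G / 2` and `d = det G`, we have `λ₂ = A − √(A² − d) = d / (A + √(A² − d))`, so
`d / (2A) ≤ λ₂ ≤ d / A`. With `r² = x² + (y − 1)²` one finds `A = (r² + 2) / 4 ∈ [1/2, 1]` and
`d = (x − (y − 1))² / 4 = (r² + 2x(1 − y)) / 4`, which on the unit square lies between `r² / 4`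
and `r² / 2`. Hence `r² / 8 ≤ λ₂ ≤ r²` on the whole square.
-/

/-- The smaller eigenvalue of the metric tensor
`G = (1/2)[[y²−2y+2, xy−x+1],[xy−x+1, x²+1]]` of the collapsed bilinear map,
given by `λ₂ = T/2 − ((T/2)² − det G)^(1/2)` with `T = trace G`. -/
noncomputable def bilinLam2 (x y : ℝ) : ℝ :=
  let T : ℝ := ((y ^ 2 - 2 * y + 2) + (x ^ 2 + 1)) / 2
  let d : ℝ := (1 / 4 : ℝ) * ((y ^ 2 - 2 * y + 2) * (x ^ 2 + 1) - (x * y - x + 1) ^ 2)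
  T / 2 - Real.sqrt ((T / 2) ^ 2 - d)

lemma sub_sqrt_sq_sub_mem_Icc {A d : ℝ} (hA : 0 < A) (hd : 0 ≤ d) (hdA : d ≤ A ^ 2) :
    A - √(A ^ 2 - d) ∈ Set.Icc (d / (2 * A)) (d / A) := by
  set q := √(A ^ 2 - d)
  have hq0 : 0 ≤ q := Real.sqrt_nonneg _
  have hqA : q ≤ A := (Real.sqrt_le_left hA.le).2 (by linarith)
  have hroot : A - q = d / (A + q) := by
    rw [eq_div_iff (by linarith)]
    linear_combination -Real.sq_sqrt (show 0 ≤ A ^ 2 - d by linarith)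
  rw [hroot]
  exact ⟨by gcongr; linarith, by gcongr; linarith⟩

lemma bilinLam2_eq (x y : ℝ) :
    bilinLam2 x y = (x ^ 2 + (y - 1) ^ 2 + 2) / 4 -
      √(((x ^ 2 + (y - 1) ^ 2 + 2) / 4) ^ 2 - (x - y + 1) ^ 2 / 4) := by
  simp only [bilinLam2]
  ring_nf

section UnitSquare

variable {x y : ℝ} (hx : x ∈ Set.Icc (0 : ℝ) 1) (hy : y ∈ Set.Icc (0 : ℝ) 1)
include hx hy

lemma bilin_half_trace_mem_Icc :
    (x ^ 2 + (y - 1) ^ 2 + 2) / 4 ∈ Set.Icc (1 / 2 : ℝ) 1 := by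
  obtain ⟨hx0, hx1⟩ := hx
  obtain ⟨hy0, hy1⟩ := hy
  constructor <;> nlinarith

lemma bilin_det_mem_Icc :
    (x - y + 1) ^ 2 / 4 ∈ Set.Icc ((x ^ 2 + (y - 1) ^ 2) / 4) ((x ^ 2 + (y - 1) ^ 2) / 2) := by
  have hcross : 0 ≤ x * (1 - y) := mul_nonneg hx.1 (by linarith [hy.2])
  constructor <;> nlinarith [sq_nonneg (x + y - 1)]

end UnitSquare

lemma bilin_det_le_half_trace_sq (x y : ℝ) :
    (x - y + 1) ^ 2 / 4 ≤ ((x ^ 2 + (y - 1) ^ 2 + 2) / 4) ^ 2 := by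
  nlinarith [sq_nonneg (x + y - 1), sq_nonneg (x ^ 2 + (y - 1) ^ 2 - 2)]

/-- Near the singular point `(0,1)`, the smaller eigenvalue `λ₂` of the collapsed
bilinear map's metric tensor satisfies `c r² ≤ λ₂ ≤ C r²`, where
`r = (x² + (y−1)²)^(1/2)`, for some constants `0 < c ≤ C`; in particular
`λ₂ → 0` as `(x,y) → (0,1)` at quadratic rate. -/
theorem bilinear_lam2_quadratic_rate :
    ∃ c C r₀ : ℝ, 0 < c ∧ c ≤ C ∧ 0 < r₀ ∧
      ∀ x y : ℝ, x ∈ Set.Icc (0:ℝ) 1 → y ∈ Set.Icc (0:ℝ) 1 →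
        Real.sqrt (x ^ 2 + (y - 1) ^ 2) < r₀ →
          c * (x ^ 2 + (y - 1) ^ 2) ≤ bilinLam2 x y ∧
          bilinLam2 x y ≤ C * (x ^ 2 + (y - 1) ^ 2) := by
  refine ⟨1 / 8, 1, 1, by norm_num, by norm_num, by norm_num, fun x y hx hy _ => ?_⟩
  obtain ⟨hA_lo, hA_hi⟩ := bilin_half_trace_mem_Icc hx hy
  obtain ⟨hd_lo, hd_hi⟩ := bilin_det_mem_Icc hx hy
  obtain ⟨hlam_lo, hlam_hi⟩ := sub_sqrt_sq_sub_mem_Icc (by linarith)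
    (by positivity) (bilin_det_le_half_trace_sq x y)
  rw [bilinLam2_eq]
  set s := x ^ 2 + (y - 1) ^ 2
  constructor
  · calc 1 / 8 * s = s / 4 / (2 * 1) := by ring
      _ ≤ _ := by gcongr
      _ ≤ _ := hlam_lo
  · calc _ ≤ _ := hlam_hi
      _ ≤ s / 2 / (1 / 2) := by gcongr
      _ = 1 * s := by ring
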